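/- Let M be a Banach algebra and e ∈ M a right identity (x ⋆ e = x for all x ∈ M). Then the left topological centre of the bidual of the subalgebra e ⋆ M (with the first Arens product) equals the intersection of the left topological centre of M'' with (e ⋆ M)''. -/

import Mathlib

open NormedSpace ContinuousLinearMap WeakDual

variable (M : Type*) [NormedRing M] [NormedAlgebra ℝ M]

/-- The continuous linear map `h ↦ (μ ↦ h · μ)` where `(h · μ) ν = h (μ * ν)`. -/
noncomputable def arensZL :
    (M →L[ℝ] ℝ) →L[ℝ] (M →L[ℝ] (M →L[ℝ] ℝ)) :=
  ((ContinuousLinearMap.compL ℝ M (M →L[ℝ] M) (M →L[ℝ] ℝ)).flip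
      (ContinuousLinearMap.mul ℝ M)).comp
    (ContinuousLinearMap.compL ℝ M M ℝ)

variable {M}

/-- `n ⊙ ·` acting on the dual: `(n ⊙ h) μ = n (h · μ)`. -/
noncomputable def arensOdot (n : (M →L[ℝ] ℝ) →L[ℝ] ℝ) :
    (M →L[ℝ] ℝ) →L[ℝ] (M →L[ℝ] ℝ) :=
  (ContinuousLinearMap.compL ℝ M (M →L[ℝ] ℝ) ℝ n).comp (arensZL M)

/-- The first (left) Arens product on the bidual: `(m □ n) h = m (n ⊙ h)`. -/
noncomputable def arensBox (m n : (M →L[ℝ] ℝ) →L[ℝ] ℝ) :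
    (M →L[ℝ] ℝ) →L[ℝ] ℝ :=
  m.comp (arensOdot n)

/-- The map `h ↦ h · e` on the dual, `(h · e) ν = h (e * ν)`. -/
noncomputable def auxR (e : M) : (M →L[ℝ] ℝ) →L[ℝ] (M →L[ℝ] ℝ) := (arensZL M).flip e

lemma dual_pi_expand {ι : Type*} [Fintype ι] [DecidableEq ι]
    (φ : (ι → ℝ) →ₗ[ℝ] ℝ) (v : ι → ℝ) :
    φ v = ∑ i, v i * φ (Pi.single i 1) := by
  conv_lhs => rw [← Finset.univ_sum_single v]
  rw [map_sum]
  refine Finset.sum_congr rfl fun i _ => ?_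
  have : Pi.single i (v i) = v i • (Pi.single i (1:ℝ) : ι → ℝ) := by
    rw [← Pi.single_smul, smul_eq_mul, mul_one]
  rw [this, map_smul, smul_eq_mul]

/-- Exact finite matching (Helly-type lemma): any `n` in the bidual agrees with some point
evaluation on the images under `auxR e` of finitely many functionals. -/
lemma aux_exists (e : M) (n : WeakDual ℝ (M →L[ℝ] ℝ)) (s : Finset (M →L[ℝ] ℝ)) :
    ∃ x : M, ∀ h ∈ s, auxR e h x = n (auxR e h) := by
  classical
  set Φ : M →ₗ[ℝ] (s → ℝ) :=
    LinearMap.pi (fun i => ((auxR e (i : M →L[ℝ] ℝ)) : M →ₗ[ℝ] ℝ)) with hΦ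
  set p : s → ℝ := fun i => n (auxR e (i : M →L[ℝ] ℝ)) with hp
  have hmem : p ∈ LinearMap.range Φ := by
    rw [← Subspace.forall_mem_dualAnnihilator_apply_eq_zero_iff (LinearMap.range Φ) p]
    intro φ hφ
    rw [Submodule.mem_dualAnnihilator] at hφ
    set c : s → ℝ := fun i => φ (Pi.single i 1) with hc
    set k : M →L[ℝ] ℝ := ∑ i : s, c i • (i : M →L[ℝ] ℝ) with hk
    have hRk : auxR e k = 0 := by
      ext x
      have h0 : φ (Φ x) = 0 := hφ (Φ x) ⟨x, rfl⟩
      rw [dual_pi_expand φ (Φ x)] at h0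
      have : auxR e k x = ∑ i : s, Φ x i * c i := by
        simp only [hk, map_sum, map_smul]
        simp only [ContinuousLinearMap.coe_sum', Finset.sum_apply,
          ContinuousLinearMap.coe_smul', Pi.smul_apply, smul_eq_mul]
        exact Finset.sum_congr rfl fun i _ => mul_comm _ _
      rw [this, ContinuousLinearMap.zero_apply]
      simpa [mul_comm] using h0
    have hφp : φ p = ∑ i : s, p i * c i := dual_pi_expand φ p
    have : (∑ i : s, p i * c i) = n (auxR e k) := by
      rw [hk, map_sum, map_sum]
      refine Finset.sum_congr rfl fun i _ => ?_
      rw [map_smul, map_smul, smul_eq_mul, hp, mul_comm]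
    rw [hφp, this, hRk, map_zero]
  obtain ⟨x, hx⟩ := hmem
  refine ⟨x, fun h hh => ?_⟩
  have := congrFun hx ⟨h, hh⟩
  exact this

lemma topDualPairing_injective {F : Type*} [NormedAddCommGroup F] [NormedSpace ℝ F] :
    Function.Injective (topDualPairing ℝ F) := fun _ _ h =>
  ContinuousLinearMap.coe_injective h

/-- `n ∘ (· · e)` lies in the weak*-closure of the canonical image of `e ⋆ M`. -/
lemma mem_closure_aux (e : M) (n : WeakDual ℝ (M →L[ℝ] ℝ)) :
    (StrongDual.toWeakDual ((toStrongDual n).comp (auxR e)) : WeakDual ℝ (M →L[ℝ] ℝ)) ∈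
      closure (Set.range fun x : M =>
        StrongDual.toWeakDual (inclusionInDoubleDual ℝ M (e * x))) := by
  classical
  have hch : ∀ s : Finset (M →L[ℝ] ℝ), ∃ x : M, ∀ h ∈ s, auxR e h x = n (auxR e h) :=
    fun s => aux_exists e n s
  choose xs hxs using hch
  set f : Finset (M →L[ℝ] ℝ) → WeakDual ℝ (M →L[ℝ] ℝ) :=
    fun s => StrongDual.toWeakDual (inclusionInDoubleDual ℝ M (e * xs s)) with hf
  have htend : Filter.Tendsto f Filter.atTop
      (nhds (StrongDual.toWeakDual ((toStrongDual n).comp (auxR e)))) := by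
    refine (WeakBilin.tendsto_iff_forall_eval_tendsto (topDualPairing ℝ (M →L[ℝ] ℝ))
      topDualPairing_injective).2 ?_
    intro h
    have hev : ∀ᶠ s in (Filter.atTop : Filter (Finset (M →L[ℝ] ℝ))),
        topDualPairing ℝ _ (f s) h =
          topDualPairing ℝ _ (StrongDual.toWeakDual ((toStrongDual n).comp (auxR e))) h := by
      refine Filter.eventually_atTop.2 ⟨{h}, fun s hs => ?_⟩
      have hh : h ∈ s := hs (Finset.mem_singleton_self h)
      have : auxR e h (xs s) = n (auxR e h) := hxs s h hh
      exact this
    exact Filter.Tendsto.congr' (hev.mono fun s h => h.symm) tendsto_const_nhds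
  exact mem_closure_of_tendsto htend (Filter.Eventually.of_forall fun s => ⟨xs s, rfl⟩)

/-- For `m` in the weak*-closure of the image of `e ⋆ M`,
`m □ n = m □ (n ∘ (· · e))`. -/
lemma box_eq (e : M) (he : ∀ x : M, x * e = x) {m : WeakDual ℝ (M →L[ℝ] ℝ)}
    (hm : m ∈ closure (Set.range fun x : M =>
      StrongDual.toWeakDual (inclusionInDoubleDual ℝ M (e * x))))
    (n : WeakDual ℝ (M →L[ℝ] ℝ)) (h : M →L[ℝ] ℝ) :
    arensBox (toStrongDual m) (toStrongDual n) h =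
      arensBox (toStrongDual m) ((toStrongDual n).comp (auxR e)) h := by
  have hsub : closure (Set.range fun x : M =>
        StrongDual.toWeakDual (inclusionInDoubleDual ℝ M (e * x))) ⊆
      {m : WeakDual ℝ (M →L[ℝ] ℝ) |
        arensBox (toStrongDual m) (toStrongDual n) h =
          arensBox (toStrongDual m) ((toStrongDual n).comp (auxR e)) h} := by
    refine closure_minimal ?_ (isClosed_eq ?_ ?_)
    · rintro _ ⟨x, rfl⟩
      show (arensOdot (toStrongDual n) h) (e * x) =
        (arensOdot ((toStrongDual n).comp (auxR e)) h) (e * x)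
      show n (arensZL M h (e * x)) = n (auxR e (arensZL M h (e * x)))
      congr 1
      ext ν
      show h ((e * x) * ν) = h ((e * x) * (e * ν))
      rw [← mul_assoc, he (e * x)]
    · exact WeakDual.eval_continuous (E := M →L[ℝ] ℝ) (arensOdot (toStrongDual n) h)
    · exact WeakDual.eval_continuous (E := M →L[ℝ] ℝ)
        (arensOdot ((toStrongDual n).comp (auxR e)) h)
  exact hsub hm

/-- If `e` is a right identity of a Banach algebra `M`, then the left topological
centre of the bidual of the subalgebra `e ⋆ M` (weak*-closure of `e ⋆ M` in `M''`,
topological centre taken via weak*-continuity on that closure) equals the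
intersection of the left topological centre of `M''` with `(e ⋆ M)''`. -/
theorem stmt_0 [CompleteSpace M] (e : M) (he : ∀ x : M, x * e = x) :
    {m : WeakDual ℝ (M →L[ℝ] ℝ) |
        m ∈ closure (Set.range fun x : M =>
          StrongDual.toWeakDual (inclusionInDoubleDual ℝ M (e * x))) ∧
        ∀ h : M →L[ℝ] ℝ, ContinuousOn
          (fun n : WeakDual ℝ (M →L[ℝ] ℝ) =>
            arensBox (toStrongDual m) (toStrongDual n) h)
          (closure (Set.range fun x : M =>
            StrongDual.toWeakDual (inclusionInDoubleDual ℝ M (e * x))))} =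
      {m : WeakDual ℝ (M →L[ℝ] ℝ) |
        ∀ h : M →L[ℝ] ℝ, Continuous
          (fun n : WeakDual ℝ (M →L[ℝ] ℝ) =>
            arensBox (toStrongDual m) (toStrongDual n) h)} ∩
      closure (Set.range fun x : M =>
        StrongDual.toWeakDual (inclusionInDoubleDual ℝ M (e * x))) := by
  ext m
  simp only [Set.mem_setOf_eq, Set.mem_inter_iff]
  constructor
  · rintro ⟨hmem, hcon⟩
    refine ⟨fun h => ?_, hmem⟩
    have heq : (fun n : WeakDual ℝ (M →L[ℝ] ℝ) =>
          arensBox (toStrongDual m) (toStrongDual n) h)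
        = (fun k : WeakDual ℝ (M →L[ℝ] ℝ) =>
            arensBox (toStrongDual m) (toStrongDual k) h) ∘
          (fun n => StrongDual.toWeakDual ((toStrongDual n).comp (auxR e))) := by
      funext n
      exact box_eq e he hmem n h
    rw [heq]
    exact (hcon h).comp_continuous
      (WeakDual.continuous_of_continuous_eval fun y => WeakDual.eval_continuous (auxR e y))
      (fun n => mem_closure_aux e n)
  · rintro ⟨hcon, hmem⟩
    exact ⟨hmem, fun h => (hcon h).continuousOn⟩
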